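/- arXiv:2006.00620 — 4 statements merged into one kernel-verified Lean document; each statement's English description precedes it below -/
import Mathlib

section
/- For all integers p, all integers q ≥ 1, and all integers n ≥ 1, the generalized hyperharmonic numbers satisfy the reduction relation (q − 1)·H_n^{(p,q)} = (n + q − 1)·H_n^{(p,q−1)} − H_n^{(p−1,q−1)}. -/
open Finset Real

/-- The generalized harmonic number `H_n^{(p)} = ∑_{k=1}^n 1/k^p`. -/
noncomputable def gH (p : ℤ) (n : ℕ) : ℝ := ∑ k ∈ Finset.Icc 1 n, ((k : ℝ) ^ p)⁻¹

/-- The generalized hyperharmonic number `H_n^{(p,q)}`: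
`H_n^{(p,0)} = 1/n^p` (with `H_0^{(p,q)} = 0`) and
`H_n^{(p,q)} = ∑_{k=1}^n H_k^{(p,q-1)}` for `q ≥ 1`. -/
noncomputable def gHH (p : ℤ) : ℕ → ℕ → ℝ
  | 0, n => if n = 0 then 0 else ((n : ℝ) ^ p)⁻¹
  | q + 1, n => ∑ k ∈ Finset.Icc 1 n, gHH p q k

/-- Euler sum of generalized harmonic numbers `ζ_{H^{(p)}}(r) = ∑_{n≥1} H_n^{(p)}/n^r`. -/
noncomputable def eulerSum (p r : ℤ) : ℝ := ∑' n : ℕ+, gH p n / (n : ℝ) ^ r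

/-- Euler sum of generalized hyperharmonic numbers
`ζ_{H^{(p,q)}}(r) = ∑_{n≥1} H_n^{(p,q)}/n^r`. -/
noncomputable def eulerSumHH (p : ℤ) (q : ℕ) (r : ℤ) : ℝ := ∑' n : ℕ+, gHH p q n / (n : ℝ) ^ r

/-- Riemann zeta value at an integer argument, `ζ(s) = ∑_{n≥1} 1/n^s`. -/
noncomputable def zv (s : ℤ) : ℝ := ∑' n : ℕ+, ((n : ℝ) ^ s)⁻¹

/-- Unsigned Stirling numbers of the first kind, defined by
`x(x+1)⋯(x+q-1) = ∑_{k=0}^q [q,k] x^k`, i.e. `[n+1,k] = [n,k-1] + n·[n,k]`. -/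
def stirlingFirst : ℕ → ℕ → ℕ
  | 0, 0 => 1
  | 0, _ + 1 => 0
  | _ + 1, 0 => 0
  | n + 1, k + 1 => stirlingFirst n k + n * stirlingFirst n (k + 1)

/-- The series `μ(r,j) = ∑_{n≥1} 1/(n^r (n+j))`. -/
noncomputable def mu (r j : ℕ) : ℝ := ∑' n : ℕ+, 1 / ((n : ℝ) ^ r * ((n : ℝ) + j))

/-- `e_j(n+1, n+2, …, n+q)`: the `j`-th elementary symmetric polynomial
evaluated at the numbers `n+1, …, n+q`. -/
noncomputable def esymmVal (n q j : ℕ) : ℝ :=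
  ∑ s ∈ Finset.powersetCard j (Finset.Icc 1 q), ∏ i ∈ s, ((n : ℝ) + i)

/-! Both sides satisfy the recursion `H_{n+1}^{(p,q+1)} = H_n^{(p,q+1)} + H_{n+1}^{(p,q)}` in `n`,
so the relation follows by induction on `q` and then on `n`, starting from
`H_n^{(p-1,0)} = n · H_n^{(p,0)}`. -/

@[simp]
lemma gHH_at_zero (p : ℤ) (q : ℕ) : gHH p q 0 = 0 := by
  cases q <;> simp [gHH]

lemma gHH_succ_succ (p : ℤ) (q n : ℕ) :
    gHH p (q + 1) (n + 1) = gHH p (q + 1) n + gHH p q (n + 1) :=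
  Finset.sum_Icc_succ_top (Nat.le_add_left 1 n) _

lemma gHH_pred_zero_eq_mul (p : ℤ) (n : ℕ) : gHH (p - 1) 0 n = n * gHH p 0 n := by
  rcases Nat.eq_zero_or_pos n with rfl | hn
  · simp
  · have hn' : (n : ℝ) ≠ 0 := by positivity
    simp only [gHH, hn.ne', if_false, zpow_sub₀ hn', zpow_one]
    field_simp

lemma cast_mul_gHH_succ (p : ℤ) (q n : ℕ) :
    (q : ℝ) * gHH p (q + 1) n = ((n : ℝ) + q) * gHH p q n - gHH (p - 1) q n := by
  induction q generalizing n with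
  | zero => simp [gHH_pred_zero_eq_mul]
  | succ q ihq =>
    induction n with
    | zero => simp
    | succ n ihn =>
      have hq := ihq (n + 1)
      rw [gHH_succ_succ] at hq
      rw [gHH_succ_succ p (q + 1), gHH_succ_succ p q, gHH_succ_succ (p - 1) q]
      push_cast at *
      linear_combination ihn + hq

theorem stmt_0_general (p : ℤ) (q n : ℕ) :
    ((q : ℝ) - 1) * gHH p q n
      = ((n : ℝ) + (q : ℝ) - 1) * gHH p (q - 1) n - gHH (p - 1) (q - 1) n := by
  cases q with
  | zero =>
    -- with `0 - 1 = 0` in `ℕ`, this case is `H_n^{(p-1,0)} = n · H_n^{(p,0)}`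
    simp only [Nat.zero_sub, Nat.cast_zero, gHH_pred_zero_eq_mul]
    ring
  | succ q =>
    rw [Nat.add_sub_cancel]
    push_cast
    linear_combination cast_mul_gHH_succ p q n

/-- Reduction relation:
`(q-1)*H_n^{(p,q)} = (n+q-1)*H_n^{(p,q-1)} - H_n^{(p-1,q-1)}` for `q >= 1`, `n >= 1`. -/
theorem stmt_0 (p : ℤ) (q n : ℕ) (hq : 1 ≤ q) (hn : 1 ≤ n) :
    ((q : ℝ) - 1) * gHH p q n
      = ((n : ℝ) + (q : ℝ) - 1) * gHH p (q - 1) n - gHH (p - 1) (q - 1) n :=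
  stmt_0_general p q n
end

section
/- For all integers p, all integers q ≥ 0, and all integers n ≥ 1, one has q!·H_n^{(p,q+1)} = Σ_{k=0}^{q} (−1)^k · e_{q−k}(n+1, n+2, …, n+q) · H_n^{(p−k)}, where e_j denotes the j-th elementary symmetric polynomial in the listed q variables (with e_0 = 1). -/
/-!
Unfolding the `q + 1` iterated sums with the hockey-stick identity gives
`H_n^{(p,q+1)} = ∑_{j=1}^n C(n-j+q, q) j^{-p}`. Since `q! C(n-j+q, q) = ∏_{i=1}^q (n+i-j)`,
Vieta's formula expands this product in powers of `j`, and the coefficient of `j^k`,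
`(-1)^k e_{q-k}(n+1, …, n+q)`, multiplies `∑_j j^{k-p} = H_n^{(p-k)}`.
-/

open Finset Real

open scoped Nat

theorem Finset.prod_sub_eq_sum_powersetCard {ι R : Type*} [CommRing R] (s : Finset ι)
    (f : ι → R) (x : R) :
    ∏ i ∈ s, (f i - x) = ∑ k ∈ range (#s + 1),
      (-1) ^ k * (∑ t ∈ s.powersetCard (#s - k), ∏ i ∈ t, f i) * x ^ k := by
  classical
  simp_rw [sub_eq_add_neg, prod_add, sum_powerset, prod_const]
  rw [← sum_range_reflect]
  refine sum_congr rfl fun k hk => ?_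
  have hk : k ≤ #s := Nat.lt_succ_iff.mp (mem_range.mp hk)
  rw [mul_assoc, mul_comm _ (x ^ k), ← mul_assoc, ← mul_pow, neg_one_mul, mul_comm, sum_mul,
    Nat.add_sub_cancel]
  refine sum_congr rfl fun t ht => ?_
  rw [mem_powersetCard] at ht
  rw [card_sdiff_of_subset ht.1, ht.2, Nat.sub_sub_self hk]

theorem Nat.factorial_mul_choose_add_eq_prod (q m : ℕ) :
    q ! * (m + q).choose q = ∏ i ∈ Icc 1 q, (m + i) := by
  rw [← Nat.ascFactorial_eq_factorial_mul_choose]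
  induction q with
  | zero => simp
  | succ q ih => rw [Nat.ascFactorial_succ, prod_Icc_succ_top (by omega), ih]; ring

theorem Nat.sum_Icc_choose_sub_add (q : ℕ) {j n : ℕ} (hjn : j ≤ n) :
    ∑ k ∈ Icc j n, (k - j + q).choose q = (n - j + q + 1).choose (q + 1) := by
  rw [← Nat.sum_Icc_choose]
  refine sum_nbij' (fun k => k - j + q) (fun m => m - q + j) ?_ ?_ ?_ ?_ fun _ _ => rfl <;>
    intro _ h <;> simp only [mem_Icc] at h ⊢ <;> omega

theorem gHH_succ_eq_sum_choose (p : ℤ) (q n : ℕ) :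
    gHH p (q + 1) n = ∑ j ∈ Icc 1 n, ((n - j + q).choose q : ℝ) * ((j : ℝ) ^ p)⁻¹ := by
  induction q generalizing n with
  | zero =>
    refine sum_congr rfl fun j hj => ?_
    have hj0 : j ≠ 0 := by grind
    simp [gHH, hj0]
  | succ q ih =>
    rw [gHH]
    simp_rw [ih]
    rw [sum_comm' (t' := Icc 1 n) (s' := fun j => Icc j n)
      (by intro k j; simp only [mem_Icc]; omega)]
    refine sum_congr rfl fun j hj => ?_
    rw [← sum_mul, ← Nat.cast_sum, Nat.sum_Icc_choose_sub_add q (mem_Icc.mp hj).2]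
    rfl

theorem prod_Icc_add_sub_eq_sum_esymmVal (n q : ℕ) (x : ℝ) :
    ∏ i ∈ Icc 1 q, ((n : ℝ) + i - x)
      = ∑ k ∈ range (q + 1), (-1) ^ k * esymmVal n q (q - k) * x ^ k := by
  simpa [esymmVal] using prod_sub_eq_sum_powersetCard (Icc 1 q) (fun i : ℕ => (n : ℝ) + i) x

theorem stmt_1_general (p : ℤ) (q n : ℕ) :
    (q.factorial : ℝ) * gHH p (q + 1) n
      = ∑ k ∈ Finset.range (q + 1),
          (-1 : ℝ) ^ k * esymmVal n q (q - k) * gH (p - k) n := by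
  simp_rw [gHH_succ_eq_sum_choose, gH, mul_sum]
  rw [sum_comm]
  refine sum_congr rfl fun j hj => ?_
  obtain ⟨hj1, hjn⟩ := mem_Icc.mp hj
  have hj0 : (j : ℝ) ≠ 0 := by positivity
  have hfact : (q ! : ℝ) * (n - j + q).choose q = ∏ i ∈ Icc 1 q, ((n : ℝ) + i - j) := by
    rw [← Nat.cast_mul, Nat.factorial_mul_choose_add_eq_prod]
    push_cast [Nat.cast_sub hjn]
    exact prod_congr rfl fun i _ => by ring
  rw [← mul_assoc, hfact, prod_Icc_add_sub_eq_sum_esymmVal, sum_mul]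
  refine sum_congr rfl fun k _ => ?_
  rw [zpow_sub₀ hj0, zpow_natCast, inv_div]
  ring

/-- `q! * H_n^{(p,q+1)} = ∑_{k=0}^q (-1)^k e_{q-k}(n+1,…,n+q) H_n^{(p-k)}`. -/
theorem stmt_1 (p : ℤ) (q n : ℕ) (hn : 1 ≤ n) :
    (q.factorial : ℝ) * gHH p (q + 1) n
      = ∑ k ∈ Finset.range (q + 1),
          (-1 : ℝ) ^ k * esymmVal n q (q - k) * gH (p - k) n :=
  stmt_1_general p q n
end

section
/- For all integers p ≥ 1, q ≥ 1 and r > q + 1, the Euler sum of generalized hyperharmonic numbers satisfies ζ_{H^{(p,q+1)}}(r) = (1/q!) · Σ_{m=0}^{q} Σ_{k=0}^{m} (−1)^k · [q+1, m+1] · C(m, k) · ζ_{H^{(p−k)}}(r + k − m), where [q+1, m+1] is the unsigned Stirling number of the first kind and C(m, k) is a binomial coefficient. -/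
open Finset Real

lemma stirl_zero (n : ℕ) : stirlingFirst (n+1) 0 = 0 := rfl

lemma stirl_big : ∀ n k : ℕ, n < k → stirlingFirst n k = 0
  | 0, k+1, _ => rfl
  | n+1, k+1, h => by
    rw [stirlingFirst, stirl_big n k (by omega), stirl_big n (k+1) (by omega)]
    simp

lemma prod_stirl (q : ℕ) (x : ℝ) :
    ∏ i ∈ Icc 1 q, (x + i) = ∑ m ∈ range (q+1), (stirlingFirst (q+1) (m+1) : ℝ) * x ^ m := by
  induction q generalizing x with
  | zero => simp [stirlingFirst]
  | succ q ih =>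
    have h1 : Icc 1 (q+1) = insert (q+1) (Icc 1 q) := by
      ext a; simp; omega
    rw [h1, Finset.prod_insert (by simp), ih, Finset.mul_sum]
    have expand : ∀ m ∈ range (q+1), (x + ((q:ℝ)+1)) * ((stirlingFirst (q+1) (m+1) : ℝ) * x ^ m)
        = (stirlingFirst (q+1) (m+1) : ℝ) * x ^ (m+1)
          + ((q:ℝ)+1) * (stirlingFirst (q+1) (m+1) : ℝ) * x ^ m := by
      intro m _; ring
    push_cast
    rw [Finset.sum_congr rfl expand, Finset.sum_add_distrib]
    have e1 : ∑ m ∈ range (q+1), (stirlingFirst (q+1) (m+1) : ℝ) * x ^ (m+1)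
        = ∑ m ∈ range (q+2), (stirlingFirst (q+1) m : ℝ) * x ^ m := by
      rw [Finset.sum_range_succ' (fun m => (stirlingFirst (q+1) m : ℝ) * x ^ m)]
      simp [stirl_zero]
    have e2 : ∑ m ∈ range (q+1), ((q:ℝ)+1) * (stirlingFirst (q+1) (m+1) : ℝ) * x ^ m
        = ∑ m ∈ range (q+2), ((q:ℝ)+1) * (stirlingFirst (q+1) (m+1) : ℝ) * x ^ m := by
      rw [show q+2 = (q+1)+1 from rfl, Finset.sum_range_succ _ (q+1),
        stirl_big (q+1) (q+2) (by omega)]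
      simp
    rw [e1, e2, ← Finset.sum_add_distrib]
    refine Finset.sum_congr rfl fun m _ => ?_
    have hrec : (stirlingFirst (q+2) (m+1) : ℝ)
        = stirlingFirst (q+1) m + ((q:ℝ)+1) * stirlingFirst (q+1) (m+1) := by
      rw [stirlingFirst]; push_cast; ring
    rw [show q + 1 + 1 = q + 2 from rfl, hrec]; ring

lemma fact_mul_choose (q a : ℕ) : q.factorial * (a + q).choose q = ∏ i ∈ Icc 1 q, (a + i) := by
  induction q with
  | zero => simp
  | succ q ih =>
    have h1 : Icc 1 (q+1) = insert (q+1) (Icc 1 q) := by ext b; simp; omega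
    rw [h1, Finset.prod_insert (by simp)]
    have h2 : (a + (q+1)).choose (q+1) * (q+1) = (a + q + 1) * (a + q).choose q := by
      have h := Nat.add_one_mul_choose_eq (a + q) q
      rw [show a + (q+1) = a + q + 1 by omega]
      omega
    calc (q+1).factorial * (a + (q+1)).choose (q+1)
        = q.factorial * ((a + (q+1)).choose (q+1) * (q+1)) := by
          rw [Nat.factorial_succ]; ring
      _ = (a + (q+1)) * (q.factorial * (a + q).choose q) := by rw [h2]; ring
      _ = (a + (q + 1)) * ∏ i ∈ Icc 1 q, (a + i) := by rw [ih]

lemma gHH_closed (p : ℤ) (q n : ℕ) :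
    gHH p (q+1) n = ∑ k ∈ Icc 1 n, ((n - k + q).choose q : ℝ) * ((k : ℝ) ^ p)⁻¹ := by
  induction q generalizing n with
  | zero =>
    rw [gHH]
    refine Finset.sum_congr rfl fun k hk => ?_
    simp only [Finset.mem_Icc] at hk
    rw [gHH]
    simp [show k ≠ 0 by omega]
  | succ q ih =>
    rw [gHH]
    simp only [ih]
    rw [Finset.sum_comm' (s := Icc 1 n) (t := fun t => Icc 1 t)
      (t' := Icc 1 n) (s' := fun k => Icc k n)
      (by intro t k; simp only [Finset.mem_Icc]; omega)]
    refine Finset.sum_congr rfl fun k hk => ?_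
    simp only [Finset.mem_Icc] at hk
    rw [← Finset.sum_mul]
    congr 1
    rw [← Nat.cast_sum]
    congr 1
    have hst : ∑ t ∈ Icc k n, (t - k + q).choose q = ∑ j ∈ Icc q (n - k + q), j.choose q := by
      apply Finset.sum_nbij' (fun t => t - k + q) (fun j => j - q + k)
      · intro t ht; simp only [Finset.mem_Icc] at *; omega
      · intro j hj; simp only [Finset.mem_Icc] at *; omega
      · intro t ht; simp only [Finset.mem_Icc] at ht; omega
      · intro j hj; simp only [Finset.mem_Icc] at hj; omega
      · intro t ht; rfl
    rw [hst, Nat.sum_Icc_choose, show n - k + q + 1 = n - k + (q+1) by omega]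

lemma sub_pow_expand (a b : ℝ) (m : ℕ) :
    (a - b) ^ m = ∑ j ∈ range (m+1), (-1:ℝ)^j * (m.choose j : ℝ) * b ^ j * a ^ (m - j) := by
  rw [sub_eq_add_neg, add_pow, ← Finset.sum_range_reflect]
  refine Finset.sum_congr rfl fun j hj => ?_
  simp only [Finset.mem_range] at hj
  rw [show m + 1 - 1 - j = m - j by omega, Nat.choose_symm (by omega),
    show m - (m - j) = j by omega, neg_pow]
  ring

lemma key (p : ℤ) (q n : ℕ) :
    (q.factorial : ℝ) * gHH p (q+1) n
      = ∑ m ∈ range (q+1), ∑ j ∈ range (m+1),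
          (-1:ℝ)^j * (stirlingFirst (q+1) (m+1) : ℝ) * (m.choose j : ℝ)
            * ((n:ℝ) ^ (m - j) * gH (p - j) n) := by
  rw [gHH_closed, Finset.mul_sum]
  have step1 : ∀ k ∈ Icc 1 n, (q.factorial : ℝ) * (((n - k + q).choose q : ℝ) * ((k:ℝ)^p)⁻¹)
      = ∑ m ∈ range (q+1), ∑ j ∈ range (m+1),
          (-1:ℝ)^j * (stirlingFirst (q+1) (m+1) : ℝ) * (m.choose j : ℝ)
            * ((n:ℝ) ^ (m - j) * ((k:ℝ) ^ j * ((k:ℝ)^p)⁻¹)) := by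
    intro k hk
    simp only [Finset.mem_Icc] at hk
    have hc : (q.factorial : ℝ) * ((n - k + q).choose q : ℝ)
        = ∏ i ∈ Icc 1 q, (((n:ℝ) - k) + i) := by
      have := congrArg (Nat.cast : ℕ → ℝ) (fact_mul_choose q (n - k))
      push_cast [Nat.cast_sub hk.2] at this
      convert this using 2
    rw [← mul_assoc, hc, prod_stirl, Finset.sum_mul]
    refine Finset.sum_congr rfl fun m _ => ?_
    rw [sub_pow_expand, Finset.mul_sum, Finset.sum_mul]
    refine Finset.sum_congr rfl fun j hj => ?_
    ring
  rw [Finset.sum_congr rfl step1, Finset.sum_comm]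
  refine Finset.sum_congr rfl fun m _ => ?_
  rw [Finset.sum_comm]
  refine Finset.sum_congr rfl fun j hj => ?_
  simp only [Finset.mem_range] at hj
  rw [← Finset.mul_sum]
  congr 1
  rw [gH, Finset.mul_sum]
  refine Finset.sum_congr rfl fun k hk => ?_
  simp only [Finset.mem_Icc] at hk
  have hk0 : (0:ℝ) < (k:ℝ) := by exact_mod_cast Nat.lt_of_lt_of_le Nat.zero_lt_one hk.1
  rw [zpow_sub₀ (ne_of_gt hk0), zpow_natCast]
  field_simp

lemma key_div (p : ℤ) (q : ℕ) (r : ℤ) (n : ℕ) (hn : 1 ≤ n) :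
    gHH p (q+1) n / (n:ℝ)^r
      = ∑ m ∈ range (q+1), ∑ j ∈ range (m+1),
          ((-1:ℝ)^j * (stirlingFirst (q+1) (m+1) : ℝ) * (m.choose j : ℝ) / (q.factorial : ℝ))
            * (gH (p - j) n / (n:ℝ) ^ (r + (j:ℤ) - (m:ℤ))) := by
  have hn0 : (0:ℝ) < (n:ℝ) := by exact_mod_cast hn
  have hf : (q.factorial : ℝ) ≠ 0 := by positivity
  have hkey := key p q n
  have hg : gHH p (q+1) n = (∑ m ∈ range (q+1), ∑ j ∈ range (m+1),
      (-1:ℝ)^j * (stirlingFirst (q+1) (m+1) : ℝ) * (m.choose j : ℝ)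
        * ((n:ℝ) ^ (m - j) * gH (p - j) n)) / (q.factorial : ℝ) := by
    rw [← hkey]; field_simp
  rw [hg, div_div, Finset.sum_div]
  refine Finset.sum_congr rfl fun m _ => ?_
  rw [Finset.sum_div]
  refine Finset.sum_congr rfl fun j hj => ?_
  simp only [Finset.mem_range] at hj
  have e : (n:ℝ) ^ (r + (j:ℤ) - (m:ℤ)) = (n:ℝ)^r / (n:ℝ) ^ (m - j : ℕ) := by
    rw [show r + (j:ℤ) - (m:ℤ) = r - ((m - j : ℕ) : ℤ) by
      push_cast [Nat.cast_sub (by omega : j ≤ m)]; ring]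
    rw [zpow_sub₀ (ne_of_gt hn0), zpow_natCast]
  rw [e]
  have hnr : (n:ℝ)^r ≠ 0 := zpow_ne_zero _ (ne_of_gt hn0)
  have hnmj : (n:ℝ)^(m - j : ℕ) ≠ 0 := pow_ne_zero _ (ne_of_gt hn0)
  rw [div_div_eq_mul_div]
  ring

lemma gH_one_le (n : ℕ) : gH 1 n ≤ 2 * Real.sqrt n := by
  induction n with
  | zero => simp [gH]
  | succ n ih =>
    rw [gH, Finset.sum_Icc_succ_top (by omega), ← gH]
    have ha2 : Real.sqrt ((n:ℝ)+1) ^ 2 = (n:ℝ)+1 := Real.sq_sqrt (by positivity)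
    have hb2 : Real.sqrt (n:ℝ) ^ 2 = (n:ℝ) := Real.sq_sqrt (by positivity)
    have ha0 : 0 ≤ Real.sqrt ((n:ℝ)+1) := Real.sqrt_nonneg _
    have hb0 : 0 ≤ Real.sqrt (n:ℝ) := Real.sqrt_nonneg _
    have hba : Real.sqrt (n:ℝ) ≤ Real.sqrt ((n:ℝ)+1) := Real.sqrt_le_sqrt (by linarith)
    have hab : Real.sqrt ((n:ℝ)+1) + Real.sqrt (n:ℝ) ≤ 2 * ((n:ℝ)+1) := by
      nlinarith [sq_nonneg (Real.sqrt ((n:ℝ)+1) - 1), sq_nonneg (Real.sqrt (n:ℝ) - 1)]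
    have hstep : (((n+1:ℕ):ℝ) ^ (1:ℤ))⁻¹ ≤ 2 * Real.sqrt ((n:ℝ)+1) - 2 * Real.sqrt (n:ℝ) := by
      have h1 : (((n+1:ℕ):ℝ) ^ (1:ℤ))⁻¹ = 1 / ((n:ℝ)+1) := by
        push_cast; rw [zpow_one]; ring
      rw [h1, div_le_iff₀ (by positivity)]
      nlinarith [mul_nonneg (by linarith : (0:ℝ) ≤ Real.sqrt ((n:ℝ)+1) - Real.sqrt (n:ℝ))
        (by linarith : (0:ℝ) ≤ 2*((n:ℝ)+1) - (Real.sqrt ((n:ℝ)+1) + Real.sqrt (n:ℝ)))]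
    have : Real.sqrt ((n+1:ℕ):ℝ) = Real.sqrt ((n:ℝ)+1) := by push_cast; ring_nf
    rw [this]
    linarith

lemma gH_nonneg (p : ℤ) (n : ℕ) : 0 ≤ gH p n := by
  rw [gH]
  refine Finset.sum_nonneg fun k hk => ?_
  simp only [Finset.mem_Icc] at hk
  have : (0:ℝ) < (k:ℝ) := by exact_mod_cast Nat.lt_of_lt_of_le Nat.zero_lt_one hk.1
  positivity

lemma gH_le (p : ℤ) (hp : 1 ≤ p) (j n : ℕ) :
    gH (p - j) n ≤ (n:ℝ) ^ j * (2 * Real.sqrt n) := by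
  calc gH (p - j) n ≤ (n:ℝ) ^ j * gH 1 n := by
        rw [gH, gH, Finset.mul_sum]
        refine Finset.sum_le_sum fun k hk => ?_
        simp only [Finset.mem_Icc] at hk
        have hk1 : (1:ℝ) ≤ (k:ℝ) := by exact_mod_cast hk.1
        have hk0 : (0:ℝ) < (k:ℝ) := by linarith
        calc ((k:ℝ) ^ (p - (j:ℤ)))⁻¹ = (k:ℝ) ^ ((j:ℤ) - p) := by
              rw [← zpow_neg]; congr 1; ring
          _ ≤ (k:ℝ) ^ ((j:ℤ) - 1) := zpow_le_zpow_right₀ hk1 (by omega)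
          _ = (k:ℝ) ^ (j:ℕ) * ((k:ℝ) ^ (1:ℤ))⁻¹ := by
              rw [← zpow_neg, ← zpow_natCast (k:ℝ) j, ← zpow_add₀ (ne_of_gt hk0),
                show (j:ℤ) + -1 = (j:ℤ) - 1 by ring]
          _ ≤ (n:ℝ) ^ j * ((k:ℝ) ^ (1:ℤ))⁻¹ := by
              have hkn : (k:ℝ) ≤ (n:ℝ) := by exact_mod_cast hk.2
              gcongr
              all_goals first | exact hk0.le | exact hkn
    _ ≤ (n:ℝ) ^ j * (2 * Real.sqrt n) := by
        gcongr
        all_goals exact gH_one_le n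

lemma summable_aux (p : ℤ) (hp : 1 ≤ p) (j : ℕ) (s : ℤ) (hs : (j:ℤ) + 2 ≤ s) :
    Summable (fun n : ℕ+ => gH (p - j) n / (n:ℝ) ^ s) := by
  have hbase : Summable (fun n : ℕ => 2 * ((n:ℝ) ^ ((3:ℝ)/2))⁻¹) := by
    have := Real.summable_one_div_nat_rpow.mpr (by norm_num : (1:ℝ) < 3/2)
    simpa [one_div] using this.mul_left 2
  have hg : Summable (fun n : ℕ+ => 2 * (((n:ℕ):ℝ) ^ ((3:ℝ)/2))⁻¹) :=
    hbase.comp_injective (fun a b h => PNat.coe_injective h)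
  refine Summable.of_nonneg_of_le (fun n => ?_) (fun n => ?_) hg
  · have hn0 : (0:ℝ) < (n:ℝ) := by exact_mod_cast n.pos
    have := gH_nonneg (p - j) n
    positivity
  · have hn0 : (0:ℝ) < ((n:ℕ):ℝ) := by exact_mod_cast n.pos
    have hn1 : (1:ℝ) ≤ ((n:ℕ):ℝ) := by exact_mod_cast n.one_le
    have hzz : (0:ℝ) < ((n:ℕ):ℝ) ^ s := zpow_pos hn0 s
    have hzz2 : (0:ℝ) < ((n:ℕ):ℝ) ^ ((j:ℤ) + 2) := zpow_pos hn0 _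
    calc gH (p - j) (n:ℕ) / ((n:ℕ):ℝ) ^ s
        ≤ (((n:ℕ):ℝ) ^ (j:ℕ) * (2 * Real.sqrt (n:ℕ))) / ((n:ℕ):ℝ) ^ s :=
          div_le_div_of_nonneg_right (gH_le p hp j n) hzz.le
        _ ≤ (((n:ℕ):ℝ) ^ (j:ℕ) * (2 * Real.sqrt (n:ℕ))) / ((n:ℕ):ℝ) ^ ((j:ℤ) + 2) := by
          apply div_le_div_of_nonneg_left (by positivity) hzz2
          exact zpow_le_zpow_right₀ hn1 hs
        _ = 2 * (((n:ℕ):ℝ) ^ ((3:ℝ)/2))⁻¹ := by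
          rw [zpow_add₀ (ne_of_gt hn0), zpow_natCast, Real.sqrt_eq_rpow,
            show ((n:ℕ):ℝ) ^ (2:ℤ) = ((n:ℕ):ℝ) ^ (2:ℝ) by
              rw [show (2:ℝ) = ((2:ℕ):ℝ) by norm_num, Real.rpow_natCast,
                show (2:ℤ) = ((2:ℕ):ℤ) by norm_num, zpow_natCast],
            mul_div_mul_left _ _ (ne_of_gt (pow_pos hn0 j)), mul_div_assoc,
            ← Real.rpow_sub hn0, show (1:ℝ)/2 - 2 = -((3:ℝ)/2) by norm_num,
            Real.rpow_neg hn0.le]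

/-- For `p, q ≥ 1` and `r > q+1`,
the Euler sum of generalized hyperharmonic numbers in terms of Euler sums. -/
theorem stmt_2 (p : ℤ) (q : ℕ) (r : ℤ) (hp : 1 ≤ p) (hq : 1 ≤ q) (hr : (q : ℤ) + 1 < r) :
    eulerSumHH p (q + 1) r
      = (1 / (q.factorial : ℝ)) *
          ∑ m ∈ Finset.range (q + 1), ∑ k ∈ Finset.range (m + 1),
            (-1 : ℝ) ^ k * (stirlingFirst (q + 1) (m + 1) : ℝ) * (m.choose k : ℝ) *
              eulerSum (p - k) (r + k - m) := by
  have hsum : ∀ m ∈ range (q+1), ∀ j ∈ range (m+1),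
      Summable (fun n : ℕ+ =>
        ((-1:ℝ)^j * (stirlingFirst (q+1) (m+1) : ℝ) * (m.choose j : ℝ) / (q.factorial : ℝ))
          * (gH (p - j) n / (n:ℝ) ^ (r + (j:ℤ) - (m:ℤ)))) := by
    intro m hm j hj
    simp only [Finset.mem_range] at hm hj
    exact (summable_aux p hp j (r + j - m) (by omega)).mul_left _
  rw [eulerSumHH]
  have hpt : ∀ n : ℕ+, gHH p (q+1) (n:ℕ) / ((n:ℕ):ℝ)^r
      = ∑ m ∈ range (q+1), ∑ j ∈ range (m+1),
          ((-1:ℝ)^j * (stirlingFirst (q+1) (m+1) : ℝ) * (m.choose j : ℝ) / (q.factorial : ℝ))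
            * (gH (p - j) (n:ℕ) / ((n:ℕ):ℝ) ^ (r + (j:ℤ) - (m:ℤ))) :=
    fun n => key_div p q r n n.one_le
  rw [tsum_congr hpt, Summable.tsum_finsetSum (fun m hm => summable_sum (fun j hj => hsum m hm j hj))]
  rw [Finset.mul_sum]
  refine Finset.sum_congr rfl fun m hm => ?_
  rw [Summable.tsum_finsetSum (fun j hj => hsum m hm j hj), Finset.mul_sum]
  refine Finset.sum_congr rfl fun j hj => ?_
  rw [tsum_mul_left, eulerSum]
  field_simp
end

section
/- Let p ≥ 1 and q, l ≥ 0 be integers with l ≥ q, and let m ≥ 1 be an integer. Then Σ_{n=1}^∞ H_n^{(p,q)} / ((n+m)·C(n+m+l, l)) = Σ_{j=0}^{l−q} C(l−q, j) · { (−1)^{j+p−1} · H_{m+j} / (m+j)^p + Σ_{k=1}^{p−1} (−1)^{j+k−1} · ζ(p+1−k) / (m+j)^k }, where H_n denotes the n-th harmonic number and ζ the Riemann zeta function. -/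
open Finset Real

open Filter Topology

noncomputable def auxA (m l n : ℕ) : ℝ :=
  (l.factorial : ℝ) * (n + m).factorial / (n + m + l + 1).factorial

lemma auxA_pos (m l n : ℕ) : 0 < auxA m l n := by
  unfold auxA
  have h1 := Nat.factorial_pos l
  have h2 := Nat.factorial_pos (n + m)
  have h3 := Nat.factorial_pos (n + m + l + 1)
  positivity

lemma auxA_le (m l n : ℕ) : auxA m l n ≤ ((n : ℝ) + m + 1)⁻¹ := by
  have hdvd : (l.factorial * (n + m + 1).factorial : ℕ) ≤ (n + m + l + 1).factorial := by
    refine Nat.le_of_dvd (Nat.factorial_pos _) ?_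
    have := Nat.factorial_mul_factorial_dvd_factorial_add l (n + m + 1)
    rwa [show l + (n + m + 1) = n + m + l + 1 by omega] at this
  have hpos : (0:ℝ) < (l.factorial : ℝ) * (n + m + 1).factorial := by
    have := Nat.factorial_pos l; have := Nat.factorial_pos (n + m + 1); positivity
  have hle : ((l.factorial : ℝ) * (n + m + 1).factorial) ≤ ((n + m + l + 1).factorial : ℝ) := by
    exact_mod_cast hdvd
  have step : auxA m l n ≤ (l.factorial : ℝ) * (n + m).factorial
      / ((l.factorial : ℝ) * (n + m + 1).factorial) := by
    unfold auxA
    exact div_le_div_of_nonneg_left (by positivity) hpos hle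
  refine step.trans (le_of_eq ?_)
  rw [Nat.factorial_succ (n + m)]
  have h2 : ((n + m).factorial : ℝ) ≠ 0 := by exact_mod_cast (Nat.factorial_pos _).ne'
  have h1 : (l.factorial : ℝ) ≠ 0 := by exact_mod_cast (Nat.factorial_pos l).ne'
  have h3 : ((n:ℝ) + m + 1) ≠ 0 := by positivity
  push_cast
  field_simp

lemma auxA_telescope (m l n : ℕ) : auxA m (l+1) n = auxA m l n - auxA m l (n+1) := by
  unfold auxA
  rw [show n + 1 + m = (n + m) + 1 by omega,
      show n + m + 1 + l + 1 = (n + m + l + 1) + 1 by omega,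
      show n + m + (l+1) + 1 = (n + m + l + 1) + 1 by omega,
      Nat.factorial_succ (n + m + l + 1), Nat.factorial_succ (n + m), Nat.factorial_succ l]
  have h1 : ((n + m + l + 1).factorial : ℝ) ≠ 0 := by exact_mod_cast (Nat.factorial_pos _).ne'
  have h2 : ((n + m).factorial : ℝ) ≠ 0 := by exact_mod_cast (Nat.factorial_pos _).ne'
  push_cast
  field_simp
  ring

lemma auxA_tendsto (m l k : ℕ) : Tendsto (fun i : ℕ => auxA m l (k + i)) atTop (𝓝 0) := by
  refine squeeze_zero (fun i => (auxA_pos m l (k+i)).le) (fun i => ?_)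
    tendsto_one_div_add_atTop_nhds_zero_nat
  refine (auxA_le m l (k+i)).trans ?_
  rw [one_div]
  refine inv_anti₀ (by positivity) ?_
  push_cast; linarith [Nat.cast_nonneg (α := ℝ) k, Nat.cast_nonneg (α := ℝ) m]

lemma auxA_hasSum (m l k : ℕ) : HasSum (fun i : ℕ => auxA m (l+1) (k + i)) (auxA m l k) := by
  rw [hasSum_iff_tendsto_nat_of_nonneg (fun i => (auxA_pos m (l+1) (k+i)).le)]
  have key : ∀ N, ∑ i ∈ range N, auxA m (l+1) (k + i) = auxA m l k - auxA m l (k + N) := by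
    intro N
    have h := Finset.sum_range_sub' (f := fun i => auxA m l (k + i)) N
    simp only [Nat.add_zero] at h
    rw [← h]
    exact Finset.sum_congr rfl fun i _ => by
      rw [auxA_telescope, show k + (i+1) = k + i + 1 by omega]
  simp only [key]
  simpa using tendsto_const_nhds.sub (auxA_tendsto m l k)

lemma sum_Icc_one (f : ℕ → ℝ) (n : ℕ) : ∑ k ∈ Icc 1 n, f k = ∑ i ∈ range n, f (i+1) := by
  induction n with
  | zero => simp
  | succ n ih =>
      rw [Finset.sum_Icc_succ_top (Nat.le_add_left 1 n), ih, Finset.sum_range_succ]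

lemma step_lemma (m l : ℕ) (g : ℕ → ℝ) (hg : ∀ k, 0 ≤ g k)
    (hsum : Summable fun k : ℕ => g (k+1) * auxA m l k) :
    Summable (fun n : ℕ => (∑ k ∈ Icc 1 (n+1), g k) * auxA m (l+1) n) ∧
    ∑' n : ℕ, (∑ k ∈ Icc 1 (n+1), g k) * auxA m (l+1) n
      = ∑' k : ℕ, g (k+1) * auxA m l k := by
  set F : ℕ × ℕ → ℝ := fun kn => if kn.1 ≤ kn.2 then g (kn.1+1) * auxA m (l+1) kn.2 else 0
    with hF
  have hF0 : 0 ≤ F := by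
    intro kn; by_cases h : kn.1 ≤ kn.2 <;>
      simp [hF, h, mul_nonneg (hg _) (auxA_pos m (l+1) _).le]
  have hrow : ∀ k : ℕ, HasSum (fun n => F (k, n)) (g (k+1) * auxA m l k) := by
    intro k
    have h1 : HasSum (fun i : ℕ => F (k, i + k)) (g (k+1) * auxA m l k) := by
      have base := (auxA_hasSum m l k).mul_left (g (k+1))
      have : (fun i : ℕ => F (k, i + k)) = fun i => g (k+1) * auxA m (l+1) (k + i) :=
        funext fun i => by simp [hF, Nat.le_add_left, add_comm]
      rw [this]; exact base
    have h2 := (hasSum_nat_add_iff (f := fun n => F (k, n)) k).1 h1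
    have h3 : ∑ i ∈ range k, F (k, i) = 0 := by
      refine Finset.sum_eq_zero fun i hi => ?_
      simp only [Finset.mem_range] at hi
      simp [hF, Nat.not_le.2 hi]
    rwa [h3, add_zero] at h2
  have hcol : ∀ n : ℕ, Summable fun k => F (k, n) := by
    intro n
    refine summable_of_ne_finset_zero (s := range (n+1)) fun k hk => ?_
    simp only [Finset.mem_range] at hk
    have hkn : ¬ k ≤ n := by omega
    simp [hF, hkn]
  have hcol_eq : ∀ n : ℕ, ∑' k, F (k, n) = (∑ k ∈ Icc 1 (n+1), g k) * auxA m (l+1) n := by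
    intro n
    rw [tsum_eq_sum (s := range (n+1)) (fun k hk => by
      simp only [Finset.mem_range] at hk
      have hkn : ¬ k ≤ n := by omega
      simp [hF, hkn])]
    rw [sum_Icc_one, Finset.sum_mul]
    refine Finset.sum_congr rfl fun k hk => ?_
    simp only [Finset.mem_range] at hk
    have hkn : k ≤ n := by omega
    simp [hF, hkn]
  have hFsum : Summable F :=
    (summable_prod_of_nonneg hF0).2
      ⟨fun k => (hrow k).summable, hsum.congr fun k => ((hrow k).tsum_eq).symm⟩
  have hswap : ∑' n, ∑' k, F (k, n) = ∑' k, ∑' n, F (k, n) :=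
    Summable.tsum_comm' (f := fun k n => F (k, n)) hFsum (fun k => (hrow k).summable) hcol
  have hmarg : Summable fun n => ∑' k, F (k, n) := by
    have := (hFsum.prod_symm).prod
    exact this.congr fun n => rfl
  constructor
  · exact hmarg.congr fun n => hcol_eq n
  · calc ∑' n : ℕ, (∑ k ∈ Icc 1 (n+1), g k) * auxA m (l+1) n
        = ∑' n, ∑' k, F (k, n) := tsum_congr fun n => (hcol_eq n).symm
      _ = ∑' k, ∑' n, F (k, n) := hswap
      _ = ∑' k : ℕ, g (k+1) * auxA m l k := tsum_congr fun k => (hrow k).tsum_eq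

lemma gHH_nonneg (p : ℤ) (hp : 0 ≤ p) : ∀ q n, 0 ≤ gHH p q n := by
  intro q
  induction q with
  | zero =>
      intro n
      unfold gHH
      split
      · exact le_refl 0
      · positivity
  | succ q ih =>
      intro n
      unfold gHH
      exact Finset.sum_nonneg fun k _ => ih k

lemma gHH_zero_eval (p n : ℕ) : gHH p 0 (n+1) = (((n:ℝ)+1) ^ p)⁻¹ := by
  unfold gHH
  rw [if_neg (Nat.succ_ne_zero n)]
  push_cast
  rw [zpow_natCast]

lemma gHH_succ_eval (p : ℤ) (q n : ℕ) : gHH p (q+1) n = ∑ k ∈ Icc 1 n, gHH p q k := rfl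

lemma sq_summable : Summable (fun n : ℕ => (((n:ℝ)+1)^2)⁻¹) := by
  have h := (summable_one_div_nat_pow (p := 2)).2 (by norm_num)
  have := (summable_nat_add_iff 1).2 h
  refine this.congr fun n => ?_
  push_cast
  rw [one_div]

lemma base_summable (p m L : ℕ) (hp : 1 ≤ p) :
    Summable (fun n : ℕ => (((n:ℝ)+1) ^ p)⁻¹ * auxA m L n) := by
  refine Summable.of_nonneg_of_le (fun n => ?_) (fun n => ?_) sq_summable
  · have := auxA_pos m L n; positivity
  · have hn1 : (0:ℝ) < (n:ℝ) + 1 := by positivity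
    have h1 : (((n:ℝ)+1) ^ p)⁻¹ ≤ ((n:ℝ)+1)⁻¹ := by
      refine inv_anti₀ hn1 ?_
      exact le_self_pow₀ (by linarith) (by omega)
    have h2 : auxA m L n ≤ ((n:ℝ)+1)⁻¹ := by
      refine (auxA_le m L n).trans (inv_anti₀ hn1 (by
        linarith [Nat.cast_nonneg (α := ℝ) m]))
    calc (((n:ℝ)+1) ^ p)⁻¹ * auxA m L n ≤ ((n:ℝ)+1)⁻¹ * ((n:ℝ)+1)⁻¹ :=
          mul_le_mul h1 h2 (auxA_pos m L n).le (by positivity)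
      _ = (((n:ℝ)+1)^2)⁻¹ := by rw [sq, mul_inv]

lemma chain (p m : ℕ) (hp : 1 ≤ p) (hm : 1 ≤ m) : ∀ q l, q ≤ l →
    Summable (fun n : ℕ => gHH p q (n+1) * auxA m l n) ∧
    ∑' n : ℕ, gHH p q (n+1) * auxA m l n
      = ∑' n : ℕ, (((n:ℝ)+1) ^ p)⁻¹ * auxA m (l-q) n := by
  intro q
  induction q with
  | zero =>
      intro l _
      constructor
      · exact (base_summable p m l hp).congr fun n => by rw [gHH_zero_eval]
      · rw [Nat.sub_zero]
        exact tsum_congr fun n => by rw [gHH_zero_eval]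
  | succ q ih =>
      intro l hl
      obtain ⟨l', rfl⟩ : ∃ l', l = l' + 1 := ⟨l - 1, by omega⟩
      have hq : q ≤ l' := by omega
      have IH := ih l' hq
      have st := step_lemma m l' (gHH p q) (gHH_nonneg p (by positivity) q) IH.1
      have hsub : l' + 1 - (q + 1) = l' - q := by omega
      constructor
      · exact st.1.congr fun n => by rw [gHH_succ_eval]
      · calc ∑' n : ℕ, gHH p (q+1) (n+1) * auxA m (l'+1) n
            = ∑' n : ℕ, (∑ k ∈ Icc 1 (n+1), gHH p q k) * auxA m (l'+1) n :=
              tsum_congr fun n => by rw [gHH_succ_eval]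
          _ = ∑' k : ℕ, gHH p q (k+1) * auxA m l' k := st.2
          _ = _ := by rw [hsub]; exact IH.2

noncomputable def auxS (L : ℕ) (x : ℝ) : ℝ :=
  ∑ j ∈ range (L+1), (-1:ℝ)^j * (L.choose j) * (x + j)⁻¹

lemma auxS_rec (L : ℕ) (x : ℝ) : auxS (L+1) x = auxS L x - auxS L (x+1) := by
  have hsplit : auxS (L+1) x =
      (∑ i ∈ range (L+1), ((-1:ℝ)^(i+1) * (L.choose i) * (x+(i+1))⁻¹
        + (-1:ℝ)^(i+1) * (L.choose (i+1)) * (x+(i+1))⁻¹)) + x⁻¹ := by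
    unfold auxS
    rw [Finset.sum_range_succ' _ (L+1)]
    congr 1
    · refine Finset.sum_congr rfl fun i _ => ?_
      rw [Nat.choose_succ_succ]
      push_cast
      ring
    · simp
  rw [hsplit, Finset.sum_add_distrib]
  have h1 : ∑ i ∈ range (L+1), (-1:ℝ)^(i+1) * (L.choose i) * (x+(i+1))⁻¹
      = - auxS L (x+1) := by
    unfold auxS
    rw [← Finset.sum_neg_distrib]
    refine Finset.sum_congr rfl fun i _ => ?_
    push_cast
    ring
  have h2 : ∑ i ∈ range (L+1), (-1:ℝ)^(i+1) * ((L.choose (i+1) : ℕ) : ℝ) * (x+(i+1))⁻¹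
      = auxS L x - x⁻¹ := by
    rw [Finset.sum_range_succ, Nat.choose_succ_self]
    have hS : auxS L x = (∑ i ∈ range L, (-1:ℝ)^(i+1) * (L.choose (i+1)) * (x+(i+1))⁻¹)
        + x⁻¹ := by
      unfold auxS
      rw [Finset.sum_range_succ' _ L]
      congr 1
      · refine Finset.sum_congr rfl fun i _ => by push_cast; ring
      · simp
    rw [hS]
    push_cast
    ring
  rw [h1, h2]
  ring

lemma auxS_eq (L : ℕ) : ∀ x : ℝ, 0 < x →
    auxS L x * (∏ i ∈ range (L+1), (x + i)) = (L.factorial : ℝ) := by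
  induction L with
  | zero =>
      intro x hx
      simp [auxS]
      field_simp
  | succ L ih =>
      intro x hx
      have hP1 : ∏ i ∈ range (L+2), (x + (i:ℝ)) = (∏ i ∈ range (L+1), (x + i)) * (x + (L+1)) := by
        rw [Finset.prod_range_succ]
        push_cast
        ring
      have hP2 : ∏ i ∈ range (L+2), (x + (i:ℝ)) = (∏ i ∈ range (L+1), ((x+1) + i)) * x := by
        rw [Finset.prod_range_succ' _ (L+1)]
        congr 1
        refine Finset.prod_congr rfl fun i _ => by push_cast; ring
        simp
      rw [auxS_rec, sub_mul]
      have e1 : auxS L x * ∏ i ∈ range (L + 1 + 1), (x + ↑i)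
          = (L.factorial : ℝ) * (x + (L+1)) := by
        rw [hP1, ← mul_assoc, ih x hx]
      have e2 : auxS L (x+1) * ∏ i ∈ range (L + 1 + 1), (x + ↑i)
          = (L.factorial : ℝ) * x := by
        rw [hP2, ← mul_assoc, ih (x+1) (by linarith)]
      rw [e1, e2, Nat.factorial_succ]
      push_cast
      ring

lemma prod_fact (m n : ℕ) : ∀ L : ℕ,
    (∏ i ∈ range (L+1), ((n:ℝ) + 1 + m + i)) * ((n + m).factorial : ℝ)
      = ((n + m + L + 1).factorial : ℝ) := by
  intro L
  induction L with
  | zero =>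
      rw [Finset.prod_range_one, show n + m + 0 + 1 = (n + m) + 1 by omega,
        Nat.factorial_succ]
      push_cast
      ring
  | succ L ih =>
      rw [Finset.prod_range_succ, mul_right_comm, ih,
        show n + m + (L+1) + 1 = (n + m + L + 1) + 1 by omega,
        Nat.factorial_succ (n + m + L + 1)]
      push_cast
      ring

lemma auxA_pf (m L n : ℕ) :
    auxA m L n = ∑ j ∈ range (L+1), (-1:ℝ)^j * (L.choose j) * (((n:ℝ) + 1 + m) + j)⁻¹ := by
  have hx : (0:ℝ) < (n:ℝ) + 1 + m := by positivity
  have hS := auxS_eq L ((n:ℝ) + 1 + m) hx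
  have hprod := prod_fact m n L
  have hPpos : (0:ℝ) < ∏ i ∈ range (L+1), ((n:ℝ) + 1 + m + i) :=
    Finset.prod_pos fun i _ => by positivity
  have hfact : (0:ℝ) < ((n + m).factorial : ℝ) := by exact_mod_cast Nat.factorial_pos _
  show auxA m L n = auxS L ((n:ℝ) + 1 + m)
  have hSdiv : auxS L ((n:ℝ)+1+m)
      = (L.factorial : ℝ) / ∏ i ∈ range (L+1), ((n:ℝ) + 1 + m + i) := by
    rw [eq_div_iff hPpos.ne']
    exact hS
  rw [hSdiv]
  unfold auxA
  rw [← hprod]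
  field_simp

lemma zsummable (s : ℕ) (hs : 2 ≤ s) : Summable (fun n : ℕ => (((n:ℝ)+1)^s)⁻¹) := by
  refine Summable.of_nonneg_of_le (fun n => by positivity) (fun n => ?_) sq_summable
  refine inv_anti₀ (by positivity) ?_
  exact pow_le_pow_right₀ (by linarith [Nat.cast_nonneg (α := ℝ) n]) hs

lemma mu_summable (p J : ℕ) (hp : 1 ≤ p) :
    Summable (fun n : ℕ => (((n:ℝ)+1)^p)⁻¹ * (((n:ℝ)+1)+J)⁻¹) := by
  refine Summable.of_nonneg_of_le (fun n => by positivity) (fun n => ?_) sq_summable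
  have hn1 : (0:ℝ) < (n:ℝ) + 1 := by positivity
  have h1 : (((n:ℝ)+1)^p)⁻¹ ≤ ((n:ℝ)+1)⁻¹ :=
    inv_anti₀ hn1 (le_self_pow₀ (by linarith) (by omega))
  have h2 : (((n:ℝ)+1)+J)⁻¹ ≤ ((n:ℝ)+1)⁻¹ :=
    inv_anti₀ hn1 (by linarith [Nat.cast_nonneg (α := ℝ) J])
  calc (((n:ℝ)+1)^p)⁻¹ * (((n:ℝ)+1)+J)⁻¹ ≤ ((n:ℝ)+1)⁻¹ * ((n:ℝ)+1)⁻¹ :=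
        mul_le_mul h1 h2 (by positivity) (by positivity)
    _ = (((n:ℝ)+1)^2)⁻¹ := by rw [sq, mul_inv]

lemma harm_hasSum (J : ℕ) (hJ : 1 ≤ J) :
    HasSum (fun n : ℕ => ((n:ℝ)+1)⁻¹ * (((n:ℝ)+1)+J)⁻¹)
      ((∑ i ∈ range J, ((i:ℝ)+1)⁻¹) / J) := by
  have hJ0 : (0:ℝ) < (J:ℝ) := by exact_mod_cast hJ
  rw [hasSum_iff_tendsto_nat_of_nonneg (fun n => by positivity)]
  have key : ∀ N : ℕ, ∑ n ∈ range N, ((n:ℝ)+1)⁻¹ * (((n:ℝ)+1)+J)⁻¹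
      = ((∑ i ∈ range J, ((i:ℝ)+1)⁻¹) - ∑ i ∈ range J, ((N:ℝ)+(i:ℝ)+1)⁻¹) / J := by
    intro N
    induction N with
    | zero =>
        simp
    | succ N ih =>
        rw [Finset.sum_range_succ, ih]
        have tel := Finset.sum_range_sub' (f := fun i => ((N:ℝ)+(i:ℝ)+1)⁻¹) J
        norm_num at tel
        have hdiff : (∑ i ∈ range J, ((N:ℝ)+(i:ℝ)+1)⁻¹)
            - ∑ i ∈ range J, (((N:ℕ)+1:ℝ)+(i:ℝ)+1)⁻¹
            = ((N:ℝ)+1)⁻¹ - ((N:ℝ)+(J:ℝ)+1)⁻¹ := by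
          rw [← tel]
          congr 1
          refine Finset.sum_congr rfl fun i _ => by push_cast; ring_nf
        have hN1 : ((N:ℝ)+1) ≠ 0 := by positivity
        have hNJ : ((N:ℝ)+(J:ℝ)+1) ≠ 0 := by positivity
        have h3 : ((N:ℝ)+1)+(J:ℝ) ≠ 0 := by positivity
        have hterm : ((N:ℝ)+1)⁻¹ * (((N:ℝ)+1)+J)⁻¹
            = (((N:ℝ)+1)⁻¹ - ((N:ℝ)+(J:ℝ)+1)⁻¹) / J := by
          have e1 : ((N:ℝ)+1)⁻¹ - ((N:ℝ)+(J:ℝ)+1)⁻¹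
              = (J:ℝ) * (((N:ℝ)+1)⁻¹ * (((N:ℝ)+1)+(J:ℝ))⁻¹) := by
            rw [inv_sub_inv hN1 hNJ,
              show ((N:ℝ)+(J:ℝ)+1) - ((N:ℝ)+1) = (J:ℝ) by ring,
              show ((N:ℝ)+(J:ℝ)+1) = ((N:ℝ)+1)+(J:ℝ) by ring,
              div_eq_mul_inv, mul_inv]
          rw [e1, mul_comm ((J:ℝ)) _, mul_div_assoc, div_self hJ0.ne', mul_one]
        push_cast at hdiff ⊢
        rw [hterm, ← hdiff]
        ring
  simp only [key]
  have hbound : ∀ N : ℕ, ∑ i ∈ range J, ((N:ℝ)+(i:ℝ)+1)⁻¹ ≤ (J:ℝ) * ((N:ℝ)+1)⁻¹ := by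
    intro N
    calc ∑ i ∈ range J, ((N:ℝ)+(i:ℝ)+1)⁻¹
        ≤ ∑ _i ∈ range J, ((N:ℝ)+1)⁻¹ := by
          refine Finset.sum_le_sum fun i _ => ?_
          exact inv_anti₀ (by positivity) (by linarith [Nat.cast_nonneg (α := ℝ) i])
      _ = (J:ℝ) * ((N:ℝ)+1)⁻¹ := by
          rw [Finset.sum_const, Finset.card_range, nsmul_eq_mul]
  have hlim : Tendsto (fun N : ℕ => (J:ℝ) * ((N:ℝ)+1)⁻¹) atTop (𝓝 0) := by
    have := tendsto_one_div_add_atTop_nhds_zero_nat.const_mul (J:ℝ)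
    simpa [one_div] using this
  have hg : Tendsto (fun N : ℕ => ∑ i ∈ range J, ((N:ℝ)+(i:ℝ)+1)⁻¹) atTop (𝓝 0) :=
    squeeze_zero (fun N => Finset.sum_nonneg fun i _ => by positivity) hbound hlim
  have := (tendsto_const_nhds (x := ∑ i ∈ range J, ((i:ℝ)+1)⁻¹) (f := atTop (α := ℕ))).sub hg
  have h2 := this.div_const (J:ℝ)
  simpa using h2

noncomputable def auxZ (s : ℕ) : ℝ := ∑' n : ℕ, (((n:ℝ)+1)^s)⁻¹

lemma formula_rec (Z : ℕ → ℝ) (h J : ℝ) (hJ : J ≠ 0) (r : ℕ) :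
    J⁻¹ * (Z (r+2) - ((-1:ℝ)^r * h / J^(r+1)
        + ∑ k ∈ Icc 1 r, (-1:ℝ)^(k-1) * Z (r+1+1-k) / J^k))
    = (-1:ℝ)^(r+1) * h / J^(r+2)
        + ∑ k ∈ Icc 1 (r+1), (-1:ℝ)^(k-1) * Z (r+2+1-k) / J^k := by
  rw [sum_Icc_one (fun k => (-1:ℝ)^(k-1) * Z (r+1+1-k) / J^k) r,
      sum_Icc_one (fun k => (-1:ℝ)^(k-1) * Z (r+2+1-k) / J^k) (r+1),
      Finset.sum_range_succ' _ r]
  have eL : ∑ i ∈ range r, (-1:ℝ)^(i+1-1) * Z (r+1+1-(i+1)) / J^(i+1)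
      = ∑ i ∈ range r, (-1:ℝ)^i * Z (r+1-i) / J^(i+1) :=
    Finset.sum_congr rfl fun i _ => by
      rw [show i+1-1 = i by omega, show r+1+1-(i+1) = r+1-i by omega]
  have eR : ∑ i ∈ range r, (-1:ℝ)^(i+1+1-1) * Z (r+2+1-(i+1+1)) / J^(i+1+1)
      = ∑ i ∈ range r, -(J⁻¹ * ((-1:ℝ)^i * Z (r+1-i) / J^(i+1))) :=
    Finset.sum_congr rfl fun i _ => by
      rw [show i+1+1-1 = i+1 by omega, show r+2+1-(i+1+1) = r+1-i by omega,
        pow_succ, pow_succ]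
      field_simp
  rw [eL, eR, Finset.sum_neg_distrib, ← Finset.mul_sum]
  rw [show (0:ℕ)+1-1 = 0 by omega, show r+2+1-(0+1) = r+2 by omega]
  have hJp1 : J^(r+1) ≠ 0 := pow_ne_zero _ hJ
  have hJp2 : J^(r+2) ≠ 0 := pow_ne_zero _ hJ
  rw [pow_succ (-1:ℝ) r, pow_succ J (r+1)]
  field_simp
  ring

lemma mu_eval (J : ℕ) (hJ : 1 ≤ J) : ∀ p : ℕ, 1 ≤ p →
    ∑' n : ℕ, (((n:ℝ)+1)^p)⁻¹ * (((n:ℝ)+1)+J)⁻¹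
      = (-1:ℝ)^(p-1) * (∑ i ∈ range J, ((i:ℝ)+1)⁻¹) / (J:ℝ)^p
        + ∑ k ∈ Icc 1 (p-1), (-1:ℝ)^(k-1) * auxZ (p+1-k) / (J:ℝ)^k := by
  have hJ0 : (0:ℝ) < (J:ℝ) := by exact_mod_cast hJ
  refine Nat.le_induction ?_ ?_
  · -- p = 1
    have hbase := (harm_hasSum J hJ).tsum_eq
    rw [show (1:ℕ)-1 = 0 from rfl]
    rw [show Icc 1 0 = (∅ : Finset ℕ) from rfl]
    rw [Finset.sum_empty, add_zero, pow_zero, one_mul, pow_one]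
    rw [← hbase]
    exact tsum_congr fun n => by rw [pow_one]
  · -- step
    intro p hp IH
    obtain ⟨r, rfl⟩ : ∃ r, p = r + 1 := ⟨p-1, by omega⟩
    have key : ∀ n : ℕ, (((n:ℝ)+1)^(r+1+1))⁻¹ * (((n:ℝ)+1)+J)⁻¹
        = ((J:ℝ))⁻¹ * ((((n:ℝ)+1)^(r+1+1))⁻¹
            - (((n:ℝ)+1)^(r+1))⁻¹ * (((n:ℝ)+1)+J)⁻¹) := by
      intro n
      have h1 : ((n:ℝ)+1) ≠ 0 := by positivity
      have h2 : ((n:ℝ)+1)+(J:ℝ) ≠ 0 := by positivity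
      rw [pow_succ]
      field_simp
      ring
    rw [tsum_congr key, tsum_mul_left,
      Summable.tsum_sub (zsummable (r+1+1) (by omega)) (mu_summable (r+1) J (by omega)), IH]
    rw [show (∑' n : ℕ, (((n:ℝ)+1)^(r+1+1))⁻¹) = auxZ (r+2) from rfl]
    rw [show r+1-1 = r by omega, show r+1+1-1 = r+1 by omega]
    exact formula_rec auxZ (∑ i ∈ range J, ((i:ℝ)+1)⁻¹) (J:ℝ) hJ0.ne' r

lemma auxA_choose (m l n : ℕ) :
    auxA m l n = (((n:ℝ) + 1 + m) * (((n + 1 + m + l).choose l : ℕ) : ℝ))⁻¹ := by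
  have h := Nat.choose_mul_factorial_mul_factorial (show l ≤ n + 1 + m + l by omega)
  rw [show n + 1 + m + l - l = n + m + 1 by omega] at h
  have hcast : ((n + 1 + m + l).factorial : ℝ)
      = ((n + 1 + m + l).choose l : ℝ) * l.factorial * (n + m + 1).factorial := by
    exact_mod_cast h.symm
  have hC : (0:ℝ) < ((n + 1 + m + l).choose l : ℝ) := by
    exact_mod_cast Nat.choose_pos (show l ≤ n + 1 + m + l by omega)
  have hf1 : (0:ℝ) < (l.factorial : ℝ) := by exact_mod_cast Nat.factorial_pos l
  have hf2 : (0:ℝ) < ((n + m).factorial : ℝ) := by exact_mod_cast Nat.factorial_pos _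
  have hx : (0:ℝ) < (n:ℝ) + 1 + m := by positivity
  unfold auxA
  rw [show n + m + l + 1 = n + 1 + m + l by omega, hcast, Nat.factorial_succ (n + m)]
  have h1 := hC.ne'
  have h2 := hf1.ne'
  have h3 := hf2.ne'
  have h4 := hx.ne'
  push_cast
  field_simp
  ring

lemma zv_eq (s : ℕ) : zv (s:ℤ) = auxZ s := by
  unfold zv auxZ
  rw [← Equiv.pnatEquivNat.symm.tsum_eq]
  refine tsum_congr fun i => ?_
  have : (((Equiv.pnatEquivNat.symm i : ℕ+) : ℕ) : ℝ) = (i:ℝ) + 1 := by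
    simp [Equiv.pnatEquivNat, Nat.succPNat]
  rw [this, zpow_natCast]

lemma zv_int (p k : ℕ) (hk : k ≤ p) : zv ((p:ℤ) + 1 - k) = auxZ (p + 1 - k) := by
  have h : ((p + 1 - k : ℕ) : ℤ) = (p:ℤ) + 1 - k := by omega
  rw [← h, zv_eq]

lemma gH_eq (n : ℕ) : gH 1 n = ∑ i ∈ range n, ((i:ℝ)+1)⁻¹ := by
  unfold gH
  rw [sum_Icc_one (fun k => ((k:ℝ) ^ (1:ℤ))⁻¹) n]
  exact Finset.sum_congr rfl fun i _ => by rw [zpow_one]; push_cast; ring_nf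


/-- Evaluation of the series of generalized hyperharmonic numbers over
reciprocal binomial coefficients, `l ≥ q`, `m ≥ 1`. -/
theorem stmt_4 (p q l m : ℕ) (hp : 1 ≤ p) (hlq : q ≤ l) (hm : 1 ≤ m) :
    ∑' n : ℕ+, gHH p q n / (((n : ℝ) + m) * ((((n : ℕ) + m + l).choose l : ℕ) : ℝ))
      = ∑ j ∈ Finset.range (l - q + 1), ((l - q).choose j : ℝ) *
          ((-1 : ℝ) ^ (j + p - 1) * gH 1 (m + j) / ((m : ℝ) + j) ^ p
            + ∑ k ∈ Finset.Icc 1 (p - 1),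
                (-1 : ℝ) ^ (j + k - 1) * zv ((p : ℤ) + 1 - k) / ((m : ℝ) + j) ^ k) := by
  set L := l - q with hL
  -- Step 1: convert the PNat tsum to a ℕ tsum
  have e1 : ∑' n : ℕ+, gHH p q n / (((n : ℝ) + m) * ((((n : ℕ) + m + l).choose l : ℕ) : ℝ))
      = ∑' i : ℕ, gHH p q (i+1) * auxA m l i := by
    rw [← Equiv.pnatEquivNat.symm.tsum_eq
      (f := fun n : ℕ+ => gHH p q n / (((n : ℝ) + m) * ((((n : ℕ) + m + l).choose l : ℕ) : ℝ)))]
    refine tsum_congr fun i => ?_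
    have hcoe : ((Equiv.pnatEquivNat.symm i : ℕ+) : ℕ) = i + 1 := by
      simp [Equiv.pnatEquivNat, Nat.succPNat]
    rw [hcoe, auxA_choose, div_eq_mul_inv]
    norm_num
  rw [e1, (chain p m hp hm q l hlq).2, ← hL]
  -- Step 2: expand auxA by partial fractions
  have e2 : ∀ i : ℕ, (((i:ℝ)+1) ^ p)⁻¹ * auxA m L i
      = ∑ j ∈ range (L+1), ((-1:ℝ)^j * ((L.choose j : ℕ):ℝ))
          * ((((i:ℝ)+1)^p)⁻¹ * (((i:ℝ)+1)+((m+j:ℕ):ℝ))⁻¹) := by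
    intro i
    rw [auxA_pf, Finset.mul_sum]
    refine Finset.sum_congr rfl fun j _ => ?_
    push_cast
    ring_nf
  rw [tsum_congr e2]
  rw [Summable.tsum_finsetSum (fun j _ => Summable.mul_left _ (mu_summable p (m+j) hp))]
  refine Finset.sum_congr rfl fun j hj => ?_
  rw [tsum_mul_left, mu_eval (m+j) (by omega) p hp, gH_eq (m+j)]
  have hmj : ((m+j:ℕ):ℝ) = (m:ℝ) + j := by push_cast; ring
  have hzv : ∀ k ∈ Icc 1 (p-1), (-1:ℝ)^(j+k-1) * zv ((p:ℤ)+1-k) / ((m:ℝ)+j)^k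
      = (-1:ℝ)^j * ((-1:ℝ)^(k-1) * auxZ (p+1-k) / ((m:ℝ)+j)^k) := by
    intro k hk
    have hk' := Finset.mem_Icc.1 hk
    rw [zv_int p k (by omega), show j+k-1 = j+(k-1) by omega, pow_add]
    ring
  rw [Finset.sum_congr rfl hzv, ← Finset.mul_sum]
  simp only [hmj]
  rw [show j+p-1 = j+(p-1) by omega, pow_add]
  generalize (∑ x ∈ range (m+j), ((x:ℝ)+1)⁻¹) = S
  generalize (∑ k ∈ Icc 1 (p-1), (-1:ℝ)^(k-1) * auxZ (p+1-k) / ((m:ℝ)+(j:ℝ))^k) = T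
  ring
end
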